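/- arXiv:2212.00275 — 2 statements merged into one kernel-verified Lean document; each statement's English description precedes it below -/
import Mathlib

section
/- Let A be an n×n nonnegative irreducible matrix with spectral radius r = r(A), and let e be a strictly positive (right) Perron eigenvector, Ae = re. Let b ≫ 0 and s ≠ 0 with r^s < 1. Define Gy = ((Ay)^{1/s} + b)^s componentwise for strictly positive y. Then for every strictly positive y there exist strictly positive vectors p, q with p ≤ y ≤ q, Gp ≫ p, and Gq ≪ q. -/
/-!
Both `p` and `q` are taken on the ray `c • e`, `p` for small and `q` for large `c`. With
`ρ = r ^ (1 / s)`, which is `< 1` because `r ^ s < 1`, and `a = (c * e i) ^ (1 / s)`, one has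
`G (c • e) i = (ρ * a + b i) ^ s` and `c * e i = a ^ s`. At the end of the ray where `a → ∞`
(`c → ∞` if `s > 0`, `c → 0⁺` if `s < 0`), eventually `ρ * a + b i < a`, and applying `x ↦ x ^ s`
gives the required inequality. At the other end `G (c • e) i` stays on the correct side of
`b i ^ s` while `c * e i` tends to `0` or to `∞`.
-/

noncomputable def specRad {n : ℕ} (A : Matrix (Fin n) (Fin n) ℝ) : ℝ :=
  sSup {r : ℝ | ∃ μ ∈ spectrum ℂ (A.map (fun a => (a : ℂ))), r = ‖μ‖}

def MatIrreducible {n : ℕ} (A : Matrix (Fin n) (Fin n) ℝ) : Prop :=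
  ∀ i j, ∃ k : ℕ, 0 < k ∧ 0 < (A ^ k) i j

open Filter Topology
open scoped Matrix

lemma specRad_nonneg {n : ℕ} (A : Matrix (Fin n) (Fin n) ℝ) : 0 ≤ specRad A :=
  Real.sSup_nonneg <| by rintro _ ⟨μ, -, rfl⟩; exact norm_nonneg μ

lemma Real.rpow_one_div_lt_one {r s : ℝ} (hr : 0 ≤ r) (h : r ^ s < 1) (hs : s ≠ 0) :
    r ^ (1 / s) < 1 := by
  rw [show 1 / s = s * (1 / s ^ 2) by field_simp, Real.rpow_mul hr]
  exact Real.rpow_lt_one (Real.rpow_nonneg hr s) h (by positivity)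

lemma Real.rpow_one_div_rpow {x s : ℝ} (hx : 0 ≤ x) (hs : s ≠ 0) : (x ^ (1 / s)) ^ s = x := by
  rw [one_div, Real.rpow_inv_rpow hx hs]

lemma Filter.Tendsto.eventually_mul_add_lt {α : Type*} {l : Filter α} {f : α → ℝ}
    (hf : Tendsto f l atTop) {ρ : ℝ} (hρ : ρ < 1) (β : ℝ) : ∀ᶠ x in l, ρ * f x + β < f x := by
  filter_upwards [(hf.const_mul_atTop (sub_pos.2 hρ)).eventually_gt_atTop β] with x hx
  linarith

lemma tendsto_mul_const_nhdsGT_zero (κ : ℝ) : Tendsto (fun c => c * κ) (𝓝[>] 0) (𝓝 0) :=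
  ((continuous_mul_const κ).tendsto' 0 0 (zero_mul κ)).mono_left nhdsWithin_le_nhds

lemma tendsto_mul_const_rpow_atTop {κ t : ℝ} (hκ : 0 < κ) (ht : 0 < t) :
    Tendsto (fun c => (c * κ) ^ t) atTop atTop :=
  (tendsto_rpow_atTop ht).comp (tendsto_id.atTop_mul_const hκ)

lemma tendsto_mul_const_rpow_nhdsGT_zero {κ t : ℝ} (hκ : 0 < κ) (ht : t < 0) :
    Tendsto (fun c => (c * κ) ^ t) (𝓝[>] 0) atTop := by
  refine (tendsto_rpow_neg_nhdsGT_zero ht).comp <|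
    tendsto_nhdsWithin_of_tendsto_nhds_of_eventually_within _ (tendsto_mul_const_nhdsGT_zero κ) ?_
  filter_upwards [self_mem_nhdsWithin] with c (hc : 0 < c) using mul_pos hc hκ

section

variable {ι : Type*} [Fintype ι]

noncomputable def rpowConjShift (A : Matrix ι ι ℝ) (b : ι → ℝ) (s : ℝ) (y : ι → ℝ) : ι → ℝ :=
  fun i => ((A *ᵥ y) i ^ (1 / s) + b i) ^ s

lemma eventually_smul_le {y : ι → ℝ} (hy : ∀ i, 0 < y i) (e : ι → ℝ) :
    ∀ᶠ c : ℝ in 𝓝[>] 0, c • e ≤ y := by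
  filter_upwards [eventually_all.2 fun i => (tendsto_mul_const_nhdsGT_zero (e i)).eventually_lt_const
    (hy i)] with c hc using fun i => (hc i).le

lemma eventually_le_smul {e : ι → ℝ} (he : ∀ i, 0 < e i) (y : ι → ℝ) :
    ∀ᶠ c : ℝ in atTop, y ≤ c • e := by
  filter_upwards [eventually_all.2 fun i => (tendsto_id.atTop_mul_const (he i)).eventually_ge_atTop
    (y i)] with c hc using hc

variable {A : Matrix ι ι ℝ} {r s : ℝ} {b e : ι → ℝ}

lemma rpowConjShift_smul_apply (hr : 0 ≤ r) (heig : A *ᵥ e = r • e) {c : ℝ} (hc : 0 ≤ c) {i : ι}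
    (he : 0 ≤ e i) :
    rpowConjShift A b s (c • e) i = (r ^ (1 / s) * (c * e i) ^ (1 / s) + b i) ^ s := by
  simp only [rpowConjShift, Matrix.mulVec_smul, heig, Pi.smul_apply, smul_eq_mul]
  rw [mul_left_comm, Real.mul_rpow hr (mul_nonneg hc he)]

lemma eventually_lt_rpowConjShift_smul (hr0 : 0 ≤ r) (heig : A *ᵥ e = r • e) (he : ∀ i, 0 < e i)
    (hb : ∀ i, 0 < b i) (hs : s ≠ 0) (hr : r ^ s < 1) :
    ∀ᶠ c : ℝ in 𝓝[>] 0, ∀ i, (c • e) i < rpowConjShift A b s (c • e) i := by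
  refine eventually_all.2 fun i => ?_
  have hei := he i
  have hbi := hb i
  rcases hs.lt_or_gt with hs | hs
  · filter_upwards [self_mem_nhdsWithin, (tendsto_mul_const_rpow_nhdsGT_zero hei
      (one_div_neg.2 hs)).eventually_mul_add_lt (Real.rpow_one_div_lt_one hr0 hr hs.ne) (b i)]
      with c (hc : 0 < c) hlt
    rw [rpowConjShift_smul_apply hr0 heig hc.le hei.le, Pi.smul_apply, smul_eq_mul]
    calc c * e i = ((c * e i) ^ (1 / s)) ^ s := (Real.rpow_one_div_rpow (by positivity) hs.ne).symm
      _ < _ := Real.rpow_lt_rpow_of_neg (by positivity) hlt hs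
  · filter_upwards [self_mem_nhdsWithin, (tendsto_mul_const_nhdsGT_zero (e i)).eventually_lt_const
      (Real.rpow_pos_of_pos hbi s)] with c (hc : 0 < c) hlt
    rw [rpowConjShift_smul_apply hr0 heig hc.le hei.le]
    refine hlt.trans_le (Real.rpow_le_rpow hbi.le (le_add_of_nonneg_left ?_) hs.le)
    positivity

lemma eventually_rpowConjShift_smul_lt (hr0 : 0 ≤ r) (heig : A *ᵥ e = r • e) (he : ∀ i, 0 < e i)
    (hb : ∀ i, 0 < b i) (hs : s ≠ 0) (hr : r ^ s < 1) :
    ∀ᶠ c : ℝ in atTop, ∀ i, rpowConjShift A b s (c • e) i < (c • e) i := by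
  refine eventually_all.2 fun i => ?_
  have hei := he i
  have hbi := hb i
  rcases hs.lt_or_gt with hs | hs
  · filter_upwards [eventually_gt_atTop 0,
      (tendsto_id.atTop_mul_const hei).eventually_gt_atTop (b i ^ s)] with c hc hlt
    rw [rpowConjShift_smul_apply hr0 heig hc.le hei.le]
    refine (Real.rpow_le_rpow_of_nonpos hbi (le_add_of_nonneg_left ?_) hs.le).trans_lt hlt
    positivity
  · filter_upwards [eventually_gt_atTop 0, (tendsto_mul_const_rpow_atTop hei
      (one_div_pos.2 hs)).eventually_mul_add_lt (Real.rpow_one_div_lt_one hr0 hr hs.ne') (b i)]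
      with c hc hlt
    rw [rpowConjShift_smul_apply hr0 heig hc.le hei.le, Pi.smul_apply, smul_eq_mul]
    calc _ < ((c * e i) ^ (1 / s)) ^ s := Real.rpow_lt_rpow (by positivity) hlt hs
      _ = c * e i := Real.rpow_one_div_rpow (by positivity) hs.ne'

end

theorem stmt_10_general {n : ℕ} (A : Matrix (Fin n) (Fin n) ℝ)
    (e : Fin n → ℝ) (he : ∀ i, 0 < e i)
    (heig : A.mulVec e = specRad A • e)
    (b : Fin n → ℝ) (hb : ∀ i, 0 < b i) (s : ℝ) (hs : s ≠ 0)
    (hr : specRad A ^ s < 1)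
    (G : (Fin n → ℝ) → (Fin n → ℝ))
    (hG : ∀ y, G y = fun i => ((∑ j, A i j * y j) ^ (1 / s) + b i) ^ s) :
    ∀ y : Fin n → ℝ, (∀ i, 0 < y i) →
      ∃ p q : Fin n → ℝ, (∀ i, 0 < p i) ∧ (∀ i, 0 < q i) ∧
        p ≤ y ∧ y ≤ q ∧ (∀ i, p i < G p i) ∧ (∀ i, G q i < q i) := by
  intro y hy
  obtain rfl : G = rpowConjShift A b s := funext hG
  have hr0 := specRad_nonneg A
  obtain ⟨c, hc, hcy, hsub⟩ := (eventually_mem_nhdsWithin.and <| (eventually_smul_le hy e).and <|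
    eventually_lt_rpowConjShift_smul hr0 heig he hb hs hr).exists
  obtain ⟨C, hC, hyC, hsuper⟩ := ((eventually_gt_atTop 0).and <| (eventually_le_smul he y).and <|
    eventually_rpowConjShift_smul_lt hr0 heig he hb hs hr).exists
  exact ⟨c • e, C • e, fun i => mul_pos hc (he i), fun i => mul_pos hC (he i), hcy, hyC, hsub,
    hsuper⟩

theorem stmt_10 {n : ℕ} (A : Matrix (Fin n) (Fin n) ℝ)
    (hA : ∀ i j, 0 ≤ A i j) (hirr : MatIrreducible A)
    (e : Fin n → ℝ) (he : ∀ i, 0 < e i)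
    (heig : A.mulVec e = specRad A • e)
    (b : Fin n → ℝ) (hb : ∀ i, 0 < b i) (s : ℝ) (hs : s ≠ 0)
    (hr : specRad A ^ s < 1)
    (G : (Fin n → ℝ) → (Fin n → ℝ))
    (hG : ∀ y, G y = fun i => ((∑ j, A i j * y j) ^ (1 / s) + b i) ^ s) :
    ∀ y : Fin n → ℝ, (∀ i, 0 < y i) →
      ∃ p q : Fin n → ℝ, (∀ i, 0 < p i) ∧ (∀ i, 0 < q i) ∧
        p ≤ y ∧ y ≤ q ∧ (∀ i, p i < G p i) ∧ (∀ i, G q i < q i) :=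
  stmt_10_general A e he heig b hb s hs hr G hG
end

section
/- Let A be an n×n nonnegative irreducible matrix, b ∈ ℝ^n strictly positive, and s a nonzero real. Then the equation x = (A x^s)^{1/s} + b (all operations componentwise) has a unique strictly positive solution if and only if r(A)^s < 1, where r(A) is the spectral radius of A. -/
/-!
Write `N x = (A x^s)^{1/s}`. On positive vectors `N` is monotone (for either sign of `s`) and
positively homogeneous. Maximising `r` subject to `r x ≤ A x` over the simplex gives a positive
eigenvector `A v = r v` with `r > 0`, and comparing moduli with `v` shows `r` is the spectral
radius. Then `V = v^{1/s}` satisfies `N V = r^{1/s} V`, and `r^{1/s} < 1 ↔ r^s < 1`.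

Comparison principle: if `x ≥ N x + b` and `y ≤ N y + b` are positive, then `y ≤ x`; otherwise
scale `y` down by the largest `t < 1` with `t y ≤ x`, and at a contact coordinate
`t y ≤ t (N y + b) < N (t y) + b ≤ N x + b ≤ x`. It gives uniqueness, and, applied to the
subsolutions `c V` for all `c > 0`, rules out a solution when `r^{1/s} ≥ 1`. When `r^{1/s} < 1`,
`N + b` maps the order interval `[b, c V]` into itself for large `c`, and Knaster–Tarski gives a
fixed point.
-/

open Finset Set Matrix

theorem exists_isFixedPt_of_mapsTo_Icc {α : Type*} [ConditionallyCompleteLattice α] {a b : α}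
    (hab : a ≤ b) {f : α → α} (hf : MonotoneOn f (Icc a b)) (hmaps : MapsTo f (Icc a b) (Icc a b)) :
    ∃ x ∈ Icc a b, Function.IsFixedPt f x := by
  have : Fact (a ≤ b) := ⟨hab⟩
  let g : Icc a b →o Icc a b := ⟨hmaps.restrict f _ _, fun x y hxy => hf x.2 y.2 hxy⟩
  exact ⟨g.lfp, g.lfp.2, congrArg Subtype.val g.isFixedPt_lfp⟩

variable {ι : Type*} [Fintype ι]

theorem exists_le_smul_of_pos (b : ι → ℝ) {w : ι → ℝ} (hw : ∀ i, 0 < w i) :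
    ∃ c : ℝ, 0 ≤ c ∧ b ≤ c • w := by
  have hterm : ∀ j, 0 ≤ |b j| / w j := fun j => div_nonneg (abs_nonneg _) (hw j).le
  refine ⟨∑ i, |b i| / w i, sum_nonneg fun j _ => hterm j, fun i => ?_⟩
  calc b i ≤ |b i| / w i * w i := by rw [div_mul_cancel₀ _ (hw i).ne']; exact le_abs_self _
    _ ≤ (∑ j, |b j| / w j) * w i := by
        gcongr
        · exact (hw i).le
        · exact single_le_sum (f := fun j => |b j| / w j) (fun j _ => hterm j)
            (mem_univ i)

theorem exists_pos_smul_le [Nonempty ι] {u w : ι → ℝ} (hu : ∀ i, 0 < u i) (hw : ∀ i, 0 < w i) :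
    ∃ ε : ℝ, 0 < ε ∧ ε • w ≤ u := by
  obtain ⟨i₀, hi₀⟩ := Finite.exists_min fun i => u i / w i
  exact ⟨u i₀ / w i₀, div_pos (hu i₀) (hw i₀), fun i => (le_div_iff₀ (hw i)).mp (hi₀ i)⟩

section Perron

variable {A : Matrix ι ι ℝ}

theorem mulVec_apply_pos (hA : ∀ i j, 0 ≤ A i j) {v : ι → ℝ} (hv : 0 ≤ v) {i j : ι}
    (hij : 0 < A i j) (hj : 0 < v j) : 0 < (A *ᵥ v) i :=
  (mul_pos hij hj).trans_le <|
    single_le_sum (f := fun k => A i k * v k) (fun k _ => mul_nonneg (hA i k) (hv k)) (mem_univ j)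

theorem mulVec_apply_pos_of_pos {B : Matrix ι ι ℝ} (hB : ∀ i j, 0 < B i j) {v : ι → ℝ}
    (hv : 0 ≤ v) (hv' : v ≠ 0) (i : ι) : 0 < (B *ᵥ v) i :=
  have ⟨j, hj⟩ := Function.ne_iff.mp hv'
  mulVec_apply_pos (fun i j => (hB i j).le) hv (hB i j) ((hv j).lt_of_ne' hj)

def collatzWielandtSet (A : Matrix ι ι ℝ) : Set ((ι → ℝ) × ℝ) :=
  {p | 0 ≤ p.1 ∧ ∑ i, p.1 i = 1 ∧ 0 ≤ p.2 ∧ p.2 • p.1 ≤ A *ᵥ p.1}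

theorem isClosed_collatzWielandtSet (A : Matrix ι ι ℝ) : IsClosed (collatzWielandtSet A) := by
  simp only [collatzWielandtSet, ofPred_and]
  refine (isClosed_le continuous_const continuous_fst).inter <|
    (isClosed_eq (by fun_prop) continuous_const).inter <|
    (isClosed_le continuous_const continuous_snd).inter <|
    isClosed_le (by fun_prop) (continuous_const.matrix_mulVec continuous_fst)

theorem isCompact_collatzWielandtSet (hA : ∀ i j, 0 ≤ A i j) :
    IsCompact (collatzWielandtSet A) := by
  refine (isCompact_Icc.prod isCompact_Icc).of_isClosed_subset (isClosed_collatzWielandtSet A)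
    (s := Set.Icc 0 1 ×ˢ Set.Icc 0 (∑ i, ∑ j, A i j)) ?_
  rintro ⟨x, r⟩ ⟨hx, hsum, hr, hrx⟩
  have hx1 (i : ι) : x i ≤ 1 := hsum ▸ single_le_sum (fun j _ => hx j) (mem_univ i)
  refine ⟨⟨hx, hx1⟩, hr, ?_⟩
  calc r = ∑ i, r * x i := by rw [← mul_sum, hsum, mul_one]
    _ ≤ ∑ i, ∑ j, A i j * x j := sum_le_sum fun i _ => hrx i
    _ ≤ ∑ i, ∑ j, A i j := sum_le_sum fun i _ => sum_le_sum fun j _ =>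
        mul_le_of_le_one_right (hA i j) (hx1 j)

theorem collatzWielandtSet_nonempty [Nonempty ι] (hA : ∀ i j, 0 ≤ A i j) :
    (collatzWielandtSet A).Nonempty := by
  have hcard : (0 : ℝ) < Fintype.card ι := Nat.cast_pos.mpr Fintype.card_pos
  refine ⟨(fun _ => (Fintype.card ι : ℝ)⁻¹, 0), fun _ => by positivity, ?_, le_rfl, ?_⟩
  · simp [hcard.ne']
  · rw [zero_smul]
    exact fun i => sum_nonneg fun j _ => mul_nonneg (hA i j) (by positivity)

theorem le_of_isMaxOn_collatzWielandtSet [Nonempty ι] {v : ι → ℝ} {r : ℝ}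
    (hmax : IsMaxOn Prod.snd (collatzWielandtSet A) (v, r)) {w : ι → ℝ} (hw : ∀ i, 0 < w i)
    {r' : ℝ} (hr' : 0 ≤ r') (hAw : r' • w ≤ A *ᵥ w) : r' ≤ r := by
  have hσ : 0 < ∑ i, w i := sum_pos (fun i _ => hw i) univ_nonempty
  refine hmax (a := ((∑ i, w i)⁻¹ • w, r')) ⟨fun i => ?_, ?_, hr', ?_⟩
  · exact mul_nonneg (inv_nonneg.mpr hσ.le) (hw i).le
  · simp only [Pi.smul_apply, smul_eq_mul, ← mul_sum, inv_mul_cancel₀ hσ.ne']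
  · rw [smul_comm, mulVec_smul]
    exact smul_le_smul_of_nonneg_left hAw (inv_nonneg.mpr hσ.le)

theorem mulVec_eq_of_isMaxOn_collatzWielandtSet [Nonempty ι] {B : Matrix ι ι ℝ}
    (hB : ∀ i j, 0 < B i j) (hAB : Commute A B) {v : ι → ℝ} {r : ℝ}
    (hv : (v, r) ∈ collatzWielandtSet A) (hmax : IsMaxOn Prod.snd (collatzWielandtSet A) (v, r)) :
    A *ᵥ v = r • v := by
  obtain ⟨hv0, hvsum, hr, hrv⟩ := hv
  by_contra hne
  have hv_ne : v ≠ 0 := by rintro rfl; simp at hvsum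
  have hw := mulVec_apply_pos_of_pos hB hv0 hv_ne
  have hgap_eq : A *ᵥ (B *ᵥ v) - r • B *ᵥ v = B *ᵥ (A *ᵥ v - r • v) := by
    rw [mulVec_mulVec, hAB.eq, ← mulVec_mulVec, mulVec_sub, mulVec_smul]
  have hgap : ∀ i, 0 < (A *ᵥ (B *ᵥ v) - r • B *ᵥ v) i := by
    rw [hgap_eq]
    exact mulVec_apply_pos_of_pos hB (sub_nonneg.mpr hrv) (sub_ne_zero.mpr hne)
  obtain ⟨ε, hε, hεw⟩ := exists_pos_smul_le hgap hw
  have hle : (r + ε) • B *ᵥ v ≤ A *ᵥ (B *ᵥ v) := by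
    rw [add_smul]; exact le_sub_iff_add_le'.mp hεw
  linarith [le_of_isMaxOn_collatzWielandtSet hmax hw (by linarith) hle]

variable [DecidableEq ι]

theorem exists_apply_pos_of_irreducible (hA : ∀ i j, 0 ≤ A i j)
    (hirr : ∀ i j, ∃ k, 0 < k ∧ 0 < (A ^ k) i j) (i : ι) : ∃ j, 0 < A i j := by
  obtain ⟨k, hk, hpos⟩ := hirr i i
  obtain ⟨k, rfl⟩ := Nat.exists_eq_add_one_of_ne_zero hk.ne'
  rw [pow_succ', Matrix.mul_apply] at hpos
  by_contra! h
  have hzero (j : ι) : A i j = 0 := le_antisymm (h j) (hA i j)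
  simp [hzero] at hpos

theorem exists_sum_pow_pos_of_irreducible (hA : ∀ i j, 0 ≤ A i j)
    (hirr : ∀ i j, ∃ k, 0 < k ∧ 0 < (A ^ k) i j) :
    ∃ m, ∀ i j, 0 < (∑ l ∈ range m, A ^ l) i j := by
  choose k _ hk using hirr
  refine ⟨univ.sup (fun p : ι × ι => k p.1 p.2) + 1, fun i j => ?_⟩
  have hmem : k i j ∈ range (univ.sup (fun p : ι × ι => k p.1 p.2) + 1) :=
    mem_range_succ_iff.mpr (le_sup (f := fun p : ι × ι => k p.1 p.2) (mem_univ (i, j)))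
  rw [Matrix.sum_apply]
  exact (hk i j).trans_le (single_le_sum (fun l _ => pow_apply_nonneg hA l i j) hmem)

theorem exists_pos_mulVec_eq_smul_of_irreducible [Nonempty ι] (hA : ∀ i j, 0 ≤ A i j)
    (hirr : ∀ i j, ∃ k, 0 < k ∧ 0 < (A ^ k) i j) :
    ∃ r : ℝ, 0 < r ∧ ∃ v : ι → ℝ, (∀ i, 0 < v i) ∧ A *ᵥ v = r • v := by
  obtain ⟨m, hB⟩ := exists_sum_pow_pos_of_irreducible hA hirr
  have hAB : Commute A (∑ l ∈ range m, A ^ l) := Commute.sum_right _ _ _ fun l _ => .self_pow A l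
  obtain ⟨⟨v, r⟩, hmem, hmax⟩ := (isCompact_collatzWielandtSet hA).exists_isMaxOn
    (collatzWielandtSet_nonempty hA) continuous_snd.continuousOn
  have hAv := mulVec_eq_of_isMaxOn_collatzWielandtSet hB hAB hmem hmax
  -- `v` itself may vanish somewhere; its image under the positive matrix `∑ A ^ l` cannot.
  set w := (∑ l ∈ range m, A ^ l) *ᵥ v
  have hv_ne : v ≠ 0 := by rintro rfl; simp [collatzWielandtSet] at hmem
  have hw : ∀ i, 0 < w i := mulVec_apply_pos_of_pos hB hmem.1 hv_ne
  have hAw : A *ᵥ w = r • w := by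
    rw [mulVec_mulVec, hAB.eq, ← mulVec_mulVec, hAv, mulVec_smul]
  obtain ⟨i⟩ := ‹Nonempty ι›
  obtain ⟨j, hij⟩ := exists_apply_pos_of_irreducible hA hirr i
  have hri : 0 < r * w i := by
    simpa [hAw] using mulVec_apply_pos hA (fun k => (hw k).le) hij (hw j)
  exact ⟨r, pos_of_mul_pos_left hri (hw i).le, w, hw, hAw⟩

end Perron

section SpectralRadius

variable [DecidableEq ι]

theorem Matrix.mem_spectrum_iff_exists_mulVec_eq_smul {K : Type*} [Field K] {M : Matrix ι ι K}
    {μ : K} : μ ∈ spectrum K M ↔ ∃ u ≠ 0, M *ᵥ u = μ • u := by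
  rw [← Matrix.spectrum_toLin', ← Module.End.hasEigenvalue_iff_mem_spectrum]
  constructor
  · intro h
    obtain ⟨u, hu⟩ := h.exists_hasEigenvector
    exact ⟨u, hu.2, by simpa using Module.End.mem_eigenspace_iff.mp hu.1⟩
  · rintro ⟨u, hu, hMu⟩
    exact Module.End.hasEigenvalue_of_hasEigenvector
      ⟨Module.End.mem_eigenspace_iff.mpr (by simpa using hMu), hu⟩

variable {A : Matrix ι ι ℝ} {v : ι → ℝ} {r : ℝ}

theorem ofReal_mem_spectrum_map_ofReal (hv : v ≠ 0) (hAv : A *ᵥ v = r • v) :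
    (r : ℂ) ∈ spectrum ℂ (A.map (fun a => (a : ℂ))) := by
  refine mem_spectrum_iff_exists_mulVec_eq_smul.mpr ⟨fun i => (v i : ℂ), ?_, ?_⟩
  · exact fun h => hv (funext fun i => by simpa using congrFun h i)
  · ext i
    simpa [mulVec, dotProduct] using congrArg Complex.ofReal (congrFun hAv i)

theorem norm_le_of_mem_spectrum_map_ofReal (hA : ∀ i j, 0 ≤ A i j) (hv : ∀ i, 0 < v i)
    (hAv : A *ᵥ v = r • v) {μ : ℂ} (hμ : μ ∈ spectrum ℂ (A.map (fun a => (a : ℂ)))) : ‖μ‖ ≤ r := by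
  obtain ⟨u, hu, hAu⟩ := mem_spectrum_iff_exists_mulVec_eq_smul.mp hμ
  obtain ⟨j, hj⟩ := Function.ne_iff.mp hu
  have : Nonempty ι := ⟨j⟩
  obtain ⟨i, hi⟩ := Finite.exists_max fun i => ‖u i‖ / v i
  have hui : 0 < ‖u i‖ := by
    have := (div_pos (norm_pos_iff.mpr hj) (hv j)).trans_le (hi j)
    exact (div_pos_iff_of_pos_right (hv i)).mp this
  have hbound (k : ι) : ‖u k‖ ≤ ‖u i‖ / v i * v k := (div_le_iff₀ (hv k)).mp (hi k)
  refine le_of_mul_le_mul_right ?_ hui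
  calc ‖μ‖ * ‖u i‖ = ‖∑ k, (A i k : ℂ) * u k‖ := by
        rw [← norm_mul, ← smul_eq_mul, ← Pi.smul_apply, ← hAu]; rfl
    _ ≤ ∑ k, A i k * ‖u k‖ := by
        refine (norm_sum_le _ _).trans_eq (sum_congr rfl fun k _ => ?_)
        rw [norm_mul, Complex.norm_real, Real.norm_of_nonneg (hA i k)]
    _ ≤ ∑ k, A i k * (‖u i‖ / v i * v k) :=
        sum_le_sum fun k _ => mul_le_mul_of_nonneg_left (hbound k) (hA i k)
    _ = ‖u i‖ / v i * (A *ᵥ v) i := by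
        rw [mulVec, dotProduct, mul_sum]; exact sum_congr rfl fun k _ => by ring
    _ = r * ‖u i‖ := by
        rw [hAv, Pi.smul_apply, smul_eq_mul]; field_simp [(hv i).ne']

end SpectralRadius

theorem specRad_eq_of_mulVec_eq {n : ℕ} [Nonempty (Fin n)] {A : Matrix (Fin n) (Fin n) ℝ}
    {v : Fin n → ℝ} {r : ℝ} (hA : ∀ i j, 0 ≤ A i j) (hv : ∀ i, 0 < v i) (hr : 0 ≤ r)
    (hAv : A *ᵥ v = r • v) : specRad A = r := by
  refine IsGreatest.csSup_eq ⟨⟨r, ?_, ?_⟩, ?_⟩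
  · have hv_ne : v ≠ 0 := fun h => (hv (Classical.arbitrary _)).ne' (congrFun h _)
    exact ofReal_mem_spectrum_map_ofReal hv_ne hAv
  · rw [Complex.norm_real, Real.norm_of_nonneg hr]
  · rintro _ ⟨μ, hμ, rfl⟩
    exact norm_le_of_mem_spectrum_map_ofReal hA hv hAv hμ

theorem specRad_of_isEmpty {n : ℕ} [IsEmpty (Fin n)] (A : Matrix (Fin n) (Fin n) ℝ) :
    specRad A = 0 := by
  simp [specRad, spectrum.of_subsingleton]

theorem rpow_one_div_lt_one_iff {r s : ℝ} (hr : 0 < r) :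
    r ^ (1 / s) < 1 ↔ r ^ s < 1 := by
  rw [Real.rpow_lt_one_iff_of_pos hr, Real.rpow_lt_one_iff_of_pos hr, one_div_neg, one_div_pos]

noncomputable def powerMeanMap (A : Matrix ι ι ℝ) (s : ℝ) (x : ι → ℝ) : ι → ℝ :=
  fun i => (∑ j, A i j * x j ^ s) ^ (1 / s)

section PowerMeanMap

variable {A : Matrix ι ι ℝ} {s : ℝ}

theorem sum_mul_rpow_pos (hA : ∀ i j, 0 ≤ A i j) {i j : ι} (hij : 0 < A i j) {x : ι → ℝ}
    (hx : ∀ i, 0 < x i) : 0 < ∑ k, A i k * x k ^ s :=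
  (mul_pos hij (Real.rpow_pos_of_pos (hx j) s)).trans_le <|
    single_le_sum (fun k _ => mul_nonneg (hA i k) (Real.rpow_pos_of_pos (hx k) s).le) (mem_univ j)

theorem powerMeanMap_nonneg (hA : ∀ i j, 0 ≤ A i j) {x : ι → ℝ} (hx : 0 ≤ x) :
    0 ≤ powerMeanMap A s x := fun i =>
  Real.rpow_nonneg (sum_nonneg fun j _ => mul_nonneg (hA i j) (Real.rpow_nonneg (hx j) s)) _

theorem powerMeanMap_smul (hA : ∀ i j, 0 ≤ A i j) (hs : s ≠ 0) {c : ℝ} (hc : 0 ≤ c) {x : ι → ℝ}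
    (hx : 0 ≤ x) : powerMeanMap A s (c • x) = c • powerMeanMap A s x := by
  ext i
  have hsum : ∑ j, A i j * (c * x j) ^ s = c ^ s * ∑ j, A i j * x j ^ s := by
    rw [mul_sum]
    refine sum_congr rfl fun j _ => ?_
    rw [Real.mul_rpow hc (hx j)]
    ring
  have hnonneg : 0 ≤ ∑ j, A i j * x j ^ s :=
    sum_nonneg fun j _ => mul_nonneg (hA i j) (Real.rpow_nonneg (hx j) s)
  simp only [powerMeanMap, Pi.smul_apply, smul_eq_mul]
  rw [hsum, Real.mul_rpow (Real.rpow_nonneg hc s) hnonneg, ← Real.rpow_mul hc,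
    mul_one_div_cancel hs, Real.rpow_one]

theorem monotoneOn_powerMeanMap (hA : ∀ i j, 0 ≤ A i j) (hrow : ∀ i, ∃ j, 0 < A i j) :
    MonotoneOn (powerMeanMap A s) {x | ∀ i, 0 < x i} := by
  intro x hx y hy hxy i
  obtain ⟨j, hij⟩ := hrow i
  rcases le_total s 0 with hs | hs
  · have hsum : ∑ k, A i k * y k ^ s ≤ ∑ k, A i k * x k ^ s :=
      sum_le_sum fun k _ => mul_le_mul_of_nonneg_left
        (Real.rpow_le_rpow_of_nonpos (hx k) (hxy k) hs) (hA i k)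
    exact Real.rpow_le_rpow_of_nonpos (sum_mul_rpow_pos hA hij hy) hsum (one_div_nonpos.mpr hs)
  · have hsum : ∑ k, A i k * x k ^ s ≤ ∑ k, A i k * y k ^ s :=
      sum_le_sum fun k _ => mul_le_mul_of_nonneg_left
        (Real.rpow_le_rpow (hx k).le (hxy k) hs) (hA i k)
    exact Real.rpow_le_rpow (sum_mul_rpow_pos hA hij hx).le hsum (one_div_nonneg.mpr hs)

theorem powerMeanMap_rpow_of_mulVec_eq (hs : s ≠ 0) {v : ι → ℝ} (hv : 0 ≤ v) {r : ℝ} (hr : 0 ≤ r)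
    (hAv : A *ᵥ v = r • v) :
    powerMeanMap A s (fun i => v i ^ (1 / s)) = r ^ (1 / s) • fun i => v i ^ (1 / s) := by
  ext i
  have hinv : ∀ j, (v j ^ (1 / s)) ^ s = v j := fun j => by
    rw [← Real.rpow_mul (hv j), one_div_mul_cancel hs, Real.rpow_one]
  have hrow : ∑ j, A i j * v j = r * v i := congrFun hAv i
  simp only [powerMeanMap, hinv, hrow, Pi.smul_apply, smul_eq_mul]
  exact Real.mul_rpow hr (hv i)

theorem le_of_le_powerMeanMap_add (hA : ∀ i j, 0 ≤ A i j) (hrow : ∀ i, ∃ j, 0 < A i j)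
    (hs : s ≠ 0) {b x y : ι → ℝ} (hb : ∀ i, 0 < b i) (hx : ∀ i, 0 < x i) (hy : ∀ i, 0 < y i)
    (hsup : powerMeanMap A s x + b ≤ x) (hsub : y ≤ powerMeanMap A s y + b) : y ≤ x := by
  intro i
  have : Nonempty ι := ⟨i⟩
  obtain ⟨i₀, hi₀⟩ := Finite.exists_min fun i => x i / y i
  set t := x i₀ / y i₀
  have ht : 0 < t := div_pos (hx i₀) (hy i₀)
  have hty : t • y ≤ x := fun j => (le_div_iff₀ (hy j)).mp (hi₀ j)
  suffices h1t : 1 ≤ t from (le_mul_of_one_le_left (hy i).le h1t).trans (hty i)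
  by_contra! ht1
  have hty_pos : t • y ∈ {z | ∀ j, 0 < z j} := fun j => mul_pos ht (hy j)
  refine lt_irrefl (x i₀) <| calc
    x i₀ = t * y i₀ := (div_mul_cancel₀ _ (hy i₀).ne').symm
    _ ≤ t * powerMeanMap A s y i₀ + t * b i₀ := by
      rw [← mul_add]; exact mul_le_mul_of_nonneg_left (hsub i₀) ht.le
    _ < powerMeanMap A s (t • y) i₀ + b i₀ := by
      rw [powerMeanMap_smul hA hs ht.le fun j => (hy j).le]
      exact (add_lt_add_iff_left _).mpr (mul_lt_of_lt_one_left (hb i₀) ht1)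
    _ ≤ powerMeanMap A s x i₀ + b i₀ :=
      add_le_add_left (monotoneOn_powerMeanMap hA hrow hty_pos hx hty i₀) _
    _ ≤ x i₀ := hsup i₀

variable (hA : ∀ i j, 0 ≤ A i j) (hrow : ∀ i, ∃ j, 0 < A i j) (hs : s ≠ 0) {b : ι → ℝ}
  (hb : ∀ i, 0 < b i) {V : ι → ℝ} (hV : ∀ i, 0 < V i) {ρ : ℝ} (hNV : powerMeanMap A s V = ρ • V)
include hA hrow hs hb hV hNV

theorem not_exists_fixedPoint_of_one_le [Nonempty ι] (hρ : 1 ≤ ρ) :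
    ¬ ∃ x, (∀ i, 0 < x i) ∧ powerMeanMap A s x + b = x := by
  rintro ⟨x, hx, hfix⟩
  have hsub : ∀ c : ℝ, 0 < c → c • V ≤ x := fun c hc =>
    le_of_le_powerMeanMap_add hA hrow hs hb hx (fun i => mul_pos hc (hV i)) hfix.le fun i => by
      have := le_mul_of_one_le_left (mul_pos hc (hV i)).le hρ
      have := hb i
      simp only [powerMeanMap_smul hA hs hc.le fun j => (hV j).le, hNV, Pi.add_apply,
        Pi.smul_apply, smul_eq_mul]
      linarith
  obtain ⟨i⟩ := ‹Nonempty ι›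
  have hc : 0 < x i / V i + 1 := by have := div_pos (hx i) (hV i); linarith
  have := hsub _ hc i
  simp only [Pi.smul_apply, smul_eq_mul, add_mul, div_mul_cancel₀ _ (hV i).ne'] at this
  linarith [hV i]

theorem exists_fixedPoint_of_lt_one (hρ : ρ < 1) :
    ∃ x, (∀ i, 0 < x i) ∧ powerMeanMap A s x + b = x := by
  obtain ⟨c, hc, hbc⟩ := exists_le_smul_of_pos b fun i => mul_pos (sub_pos.mpr hρ) (hV i)
  have hNcV : powerMeanMap A s (c • V) + b ≤ c • V := fun i => by
    have := hbc i
    simp only [powerMeanMap_smul hA hs hc fun j => (hV j).le, hNV, Pi.add_apply,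
      Pi.smul_apply, smul_eq_mul] at this ⊢
    linarith
  have hIcc_pos : Icc b (c • V) ⊆ {x | ∀ i, 0 < x i} := fun x hx i => (hb i).trans_le (hx.1 i)
  have hmono : MonotoneOn (powerMeanMap A s + fun _ => b) (Icc b (c • V)) :=
    ((monotoneOn_powerMeanMap hA hrow).mono hIcc_pos).add_const b
  have hbcV : b ≤ c • V :=
    (le_add_of_nonneg_left (powerMeanMap_nonneg hA fun i => mul_nonneg hc (hV i).le)).trans hNcV
  have hmaps : MapsTo (powerMeanMap A s + fun _ => b) (Icc b (c • V)) (Icc b (c • V)) :=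
    fun x hx => ⟨le_add_of_nonneg_left (powerMeanMap_nonneg hA fun i => (hIcc_pos hx i).le),
      (hmono hx ⟨hbcV, le_rfl⟩ hx.2).trans hNcV⟩
  obtain ⟨x, hx, hfix⟩ := exists_isFixedPt_of_mapsTo_Icc hbcV hmono hmaps
  exact ⟨x, hIcc_pos hx, hfix⟩

theorem existsUnique_fixedPoint_iff [Nonempty ι] :
    (∃! x : ι → ℝ, (∀ i, 0 < x i) ∧ ∀ i, x i = powerMeanMap A s x i + b i) ↔ ρ < 1 := by
  have hfix (x : ι → ℝ) : (∀ i, x i = powerMeanMap A s x i + b i) ↔ powerMeanMap A s x + b = x := by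
    rw [eq_comm, funext_iff]; rfl
  simp only [hfix]
  constructor
  · rintro ⟨x, hx, -⟩
    by_contra! hρ
    exact not_exists_fixedPoint_of_one_le hA hrow hs hb hV hNV hρ ⟨x, hx⟩
  · intro hρ
    obtain ⟨x, hx, hfx⟩ := exists_fixedPoint_of_lt_one hA hrow hs hb hV hNV hρ
    refine ⟨x, ⟨hx, hfx⟩, fun y ⟨hy, hfy⟩ => le_antisymm ?_ ?_⟩
    · exact le_of_le_powerMeanMap_add hA hrow hs hb hx hy hfx.le hfy.ge
    · exact le_of_le_powerMeanMap_add hA hrow hs hb hy hx hfy.le hfx.ge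

end PowerMeanMap

theorem stmt_15 {n : ℕ} (A : Matrix (Fin n) (Fin n) ℝ)
    (hA : ∀ i j, 0 ≤ A i j) (hirr : MatIrreducible A)
    (b : Fin n → ℝ) (hb : ∀ i, 0 < b i) (s : ℝ) (hs : s ≠ 0) :
    (∃! x : Fin n → ℝ, (∀ i, 0 < x i) ∧
        ∀ i, x i = (∑ j, A i j * (x j) ^ s) ^ (1 / s) + b i) ↔
      specRad A ^ s < 1 := by
  rcases isEmpty_or_nonempty (Fin n) with hn | hn
  · rw [specRad_of_isEmpty, Real.zero_rpow hs]
    exact iff_of_true ⟨0, ⟨isEmptyElim, isEmptyElim⟩, fun _ _ => Subsingleton.elim _ _⟩ one_pos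
  · obtain ⟨r, hr, v, hv, hAv⟩ := exists_pos_mulVec_eq_smul_of_irreducible hA hirr
    rw [specRad_eq_of_mulVec_eq hA hv hr.le hAv, ← rpow_one_div_lt_one_iff hr]
    exact existsUnique_fixedPoint_iff hA (exists_apply_pos_of_irreducible hA hirr) hs hb
      (fun i => Real.rpow_pos_of_pos (hv i) _)
      (powerMeanMap_rpow_of_mulVec_eq hs (fun i => (hv i).le) hr.le hAv)
end
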